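/- arXiv:1312.3277 — 6 statements merged into one kernel-verified Lean document; each statement's English description precedes it below -/
import Mathlib

section
/- Let a ∈ 𝒜 and let u : 𝕋 → ℂ be continuous with weak derivative u' ∈ L²(𝕋). Then ‖u'‖²_{L²} + ‖u‖²_{L²} ≤ 5 (‖u'‖²_{L²} + ∫ a|u|²), i.e. ‖u‖²_{H¹} ≤ 5 ‖u‖²_{H¹_a}. In particular, ‖·‖_{H¹_a} is a norm on H¹(𝕋), and the constant 5 is independent of a. -/
/-!
For `x, y ∈ [0, 1]`, `‖u x‖ ≤ ‖u y‖ + ∫ ‖u'‖`. Averaging in `y` against the probability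
density `a` gives `‖u x‖ ≤ ∫ a ‖u‖ + ∫ ‖u'‖`, and Jensen's inequality for the square (once for
the density `a`, once for the constant density `1`) bounds the two terms by `(∫ a ‖u‖²)^{1/2}`
and `‖u'‖_{L²}`. Hence `‖u‖_∞² ≤ 2 ∫ a ‖u‖² + 2 ‖u'‖²_{L²}`, which gives the claim even with `3`
in place of `5`.
-/

open MeasureTheory Set

noncomputable section

/-- `a ∈ 𝒜`: a measurable 1-periodic function (a function on the torus `𝕋`),
nonnegative a.e., integrable over one period, with `∫ a = 1`. -/
def MemA (a : ℝ → ℝ) : Prop :=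
  Measurable a ∧ (∀ x, a (x + 1) = a x) ∧ (∀ᵐ x : ℝ, 0 ≤ a x) ∧
    IntegrableOn a (Ioc 0 1) ∧ (∫ x in Ioc (0:ℝ) 1, a x) = 1

section WeightedAverage

variable {α : Type*} [MeasurableSpace α] {μ : Measure α} {w g : α → ℝ}

theorem le_integral_mul_add_of_ae_le {c L : ℝ} (hw1 : ∫ x, w x ∂μ = 1)
    (hwg : Integrable (fun x => w x * g x) μ) (hw : 0 ≤ᵐ[μ] w)
    (h : ∀ᵐ y ∂μ, c ≤ g y + L) :
    c ≤ (∫ x, w x * g x ∂μ) + L := by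
  have hw_int : Integrable w μ := Integrable.of_integral_ne_zero (by simp [hw1])
  calc c = ∫ x, w x * c ∂μ := by rw [integral_mul_const, hw1, one_mul]
    _ ≤ ∫ x, (w x * g x + w x * L) ∂μ := by
        refine integral_mono_ae (hw_int.mul_const c) (hwg.add (hw_int.mul_const L)) ?_
        filter_upwards [hw, h] with y hwy hy
        rw [← mul_add]
        exact mul_le_mul_of_nonneg_left hy hwy
    _ = (∫ x, w x * g x ∂μ) + L := by
        rw [integral_add hwg (hw_int.mul_const L), integral_mul_const, hw1, one_mul]

theorem sq_integral_mul_le_integral_mul_sq (hw1 : ∫ x, w x ∂μ = 1)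
    (hwg : Integrable (fun x => w x * g x) μ) (hwg2 : Integrable (fun x => w x * g x ^ 2) μ)
    (hw : 0 ≤ᵐ[μ] w) :
    (∫ x, w x * g x ∂μ) ^ 2 ≤ ∫ x, w x * g x ^ 2 ∂μ := by
  have hw_int : Integrable w μ := Integrable.of_integral_ne_zero (by simp [hw1])
  set m := ∫ x, w x * g x ∂μ
  -- the variance of `g` under the density `w`
  have hvar : 0 ≤ ∫ x, w x * (g x - m) ^ 2 ∂μ :=
    integral_nonneg_of_ae <| by filter_upwards [hw] with x hx; exact mul_nonneg hx (sq_nonneg _)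
  have hexpand : ∫ x, w x * (g x - m) ^ 2 ∂μ = (∫ x, w x * g x ^ 2 ∂μ) - m ^ 2 := by
    have hsub : Integrable (fun x => w x * g x ^ 2 - 2 * m * (w x * g x)) μ :=
      hwg2.sub (hwg.const_mul _)
    rw [show (fun x => w x * (g x - m) ^ 2)
        = fun x => w x * g x ^ 2 - 2 * m * (w x * g x) + m ^ 2 * w x by funext x; ring,
      integral_add hsub (hw_int.const_mul _), integral_sub hwg2 (hwg.const_mul _),
      integral_const_mul, integral_const_mul, hw1]
    ring
  linarith

theorem sq_integral_norm_le_integral_norm_sq [IsProbabilityMeasure μ] {F : Type*}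
    [NormedAddCommGroup F] {f : α → F} (hf : MemLp f 2 μ) :
    (∫ x, ‖f x‖ ∂μ) ^ 2 ≤ ∫ x, ‖f x‖ ^ 2 ∂μ := by
  simpa using sq_integral_mul_le_integral_mul_sq (μ := μ) (w := fun _ => 1)
    (g := fun x => ‖f x‖) (by simp) (by simpa using (hf.integrable one_le_two).norm)
    (by simpa using hf.integrable_norm_pow two_ne_zero) (ae_of_all _ fun _ => zero_le_one)

end WeightedAverage

section Primitive

variable {E : Type*} [NormedAddCommGroup E] [NormedSpace ℝ E] {u u' : ℝ → E} {a b : ℝ}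

theorem norm_sub_le_integral_norm_of_eq_add_integral
    (hu : ∀ x ∈ Icc a b, u x = u a + ∫ r in a..x, u' r) (hu' : IntegrableOn u' (Ioc a b))
    {s t : ℝ} (hs : s ∈ Icc a b) (ht : t ∈ Icc a b) :
    ‖u t - u s‖ ≤ ∫ r in Ioc a b, ‖u' r‖ := by
  have hii : ∀ x ∈ Icc a b, IntervalIntegrable u' volume a x := fun x hx =>
    (intervalIntegrable_iff_integrableOn_Ioc_of_le hx.1).2
      (hu'.mono_set (Ioc_subset_Ioc_right hx.2))
  have hdiff : u t - u s = ∫ r in s..t, u' r := by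
    rw [hu t ht, hu s hs, add_sub_add_left_eq_sub,
      intervalIntegral.integral_interval_sub_left (hii t ht) (hii s hs)]
  rw [hdiff]
  refine intervalIntegral.norm_integral_le_integral_norm_uIoc.trans ?_
  refine setIntegral_mono_set hu'.norm (ae_of_all _ fun _ => norm_nonneg _) ?_
  exact (Ioc_subset_Ioc (le_min hs.1 ht.1) (max_le hs.2 ht.2)).eventuallyLE

theorem norm_le_integral_mul_norm_add_integral_norm_deriv {w : ℝ → ℝ}
    (hu : ∀ x ∈ Icc a b, u x = u a + ∫ r in a..x, u' r) (hu' : IntegrableOn u' (Ioc a b))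
    (hw1 : ∫ y in Ioc a b, w y = 1) (hwu : IntegrableOn (fun y => w y * ‖u y‖) (Ioc a b))
    (hw : 0 ≤ᵐ[volume.restrict (Ioc a b)] w) {x : ℝ} (hx : x ∈ Icc a b) :
    ‖u x‖ ≤ (∫ y in Ioc a b, w y * ‖u y‖) + ∫ r in Ioc a b, ‖u' r‖ := by
  refine le_integral_mul_add_of_ae_le hw1 hwu hw <|
    ae_restrict_of_forall_mem measurableSet_Ioc fun y hy => ?_
  exact (norm_le_norm_add_norm_sub' (u x) (u y)).trans <| add_le_add_right
    (norm_sub_le_integral_norm_of_eq_add_integral hu hu' (Ioc_subset_Icc_self hy) hx) _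

end Primitive

theorem statement_3_general (a : ℝ → ℝ) (ha : MemA a)
    (u u' : ℝ → ℂ)
    (hu_cont : Continuous u)
    (hu_prim : ∀ x, u x = u 0 + ∫ t in (0:ℝ)..x, u' t)
    (hu'_L2 : MemLp u' 2 (volume.restrict (Ioc (0:ℝ) 1))) :
    (∫ x in Ioc (0:ℝ) 1, ‖u' x‖ ^ 2) + (∫ x in Ioc (0:ℝ) 1, ‖u x‖ ^ 2)
      ≤ 5 * ((∫ x in Ioc (0:ℝ) 1, ‖u' x‖ ^ 2)
              + (∫ x in Ioc (0:ℝ) 1, a x * ‖u x‖ ^ 2)) := by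
  obtain ⟨-, -, ha_nn, ha_int, ha_one⟩ := ha
  have : IsProbabilityMeasure (volume.restrict (Ioc (0:ℝ) 1)) := ⟨by simp⟩
  set D := ∫ x in Ioc (0:ℝ) 1, ‖u' x‖ ^ 2
  set A := ∫ x in Ioc (0:ℝ) 1, a x * ‖u x‖ ^ 2
  set B := ∫ x in Ioc (0:ℝ) 1, a x * ‖u x‖
  set L := ∫ x in Ioc (0:ℝ) 1, ‖u' x‖
  have ha_nn' : 0 ≤ᵐ[volume.restrict (Ioc (0:ℝ) 1)] a := ae_restrict_of_ae ha_nn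
  have hau : IntegrableOn (fun x => a x * ‖u x‖) (Ioc 0 1) :=
    ha_int.mul_continuousOn_of_subset hu_cont.norm.continuousOn measurableSet_Ioc
      isCompact_Icc Ioc_subset_Icc_self
  have hau2 : IntegrableOn (fun x => a x * ‖u x‖ ^ 2) (Ioc 0 1) :=
    ha_int.mul_continuousOn_of_subset (hu_cont.norm.pow 2).continuousOn measurableSet_Ioc
      isCompact_Icc Ioc_subset_Icc_self
  have hB : B ^ 2 ≤ A := sq_integral_mul_le_integral_mul_sq ha_one hau hau2 ha_nn'
  have hL : L ^ 2 ≤ D := sq_integral_norm_le_integral_norm_sq hu'_L2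
  have hpt : ∀ x ∈ Ioc (0:ℝ) 1, ‖u x‖ ^ 2 ≤ 2 * A + 2 * D := fun x hx => by
    have := norm_le_integral_mul_norm_add_integral_norm_deriv (fun z _ => hu_prim z)
      (hu'_L2.integrable one_le_two) ha_one hau ha_nn' (Ioc_subset_Icc_self hx)
    nlinarith [norm_nonneg (u x), sq_nonneg (B - L)]
  have hU : ∫ x in Ioc (0:ℝ) 1, ‖u x‖ ^ 2 ≤ 2 * A + 2 * D :=
    calc ∫ x in Ioc (0:ℝ) 1, ‖u x‖ ^ 2 ≤ ∫ _ in Ioc (0:ℝ) 1, (2 * A + 2 * D) :=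
          setIntegral_mono_on (hu_cont.norm.pow 2).integrableOn_Ioc
            (integrableOn_const (by simp)) measurableSet_Ioc hpt
      _ = 2 * A + 2 * D := by simp
  have hA0 : 0 ≤ A := integral_nonneg_of_ae <| by
    filter_upwards [ha_nn'] with x hx; exact mul_nonneg hx (sq_nonneg _)
  have hD0 : 0 ≤ D := integral_nonneg fun x => sq_nonneg _
  linarith

/-- for `a ∈ 𝒜` and `u : 𝕋 → ℂ` continuous with weak derivative
`u' ∈ L²(𝕋)`, one has `‖u‖²_{H¹} ≤ 5 ‖u‖²_{H¹_a}`, i.e.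
`‖u'‖²_{L²} + ‖u‖²_{L²} ≤ 5 (‖u'‖²_{L²} + ∫ a |u|²)`, the constant `5` being
independent of `a`. -/
theorem statement_3 (a : ℝ → ℝ) (ha : MemA a)
    (u u' : ℝ → ℂ)
    (hu_per : ∀ x, u (x + 1) = u x)
    (hu'_per : ∀ x, u' (x + 1) = u' x)
    (hu_cont : Continuous u)
    (hu_prim : ∀ x, u x = u 0 + ∫ t in (0:ℝ)..x, u' t)
    (hu'_L2 : MemLp u' 2 (volume.restrict (Ioc (0:ℝ) 1))) :
    (∫ x in Ioc (0:ℝ) 1, ‖u' x‖ ^ 2) + (∫ x in Ioc (0:ℝ) 1, ‖u x‖ ^ 2)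
      ≤ 5 * ((∫ x in Ioc (0:ℝ) 1, ‖u' x‖ ^ 2)
              + (∫ x in Ioc (0:ℝ) 1, a x * ‖u x‖ ^ 2)) :=
  statement_3_general a ha u u' hu_cont hu_prim hu'_L2
end
end

section
/- Let a ∈ 𝒜 and let u : 𝕋 → ℂ be continuous with weak derivative u' ∈ L²(𝕋). Then ‖u‖²_∞ ≤ 4 (‖u'‖²_{L²} + ∫ a|u|²), where ‖u‖_∞ = max_{x∈𝕋} |u(x)| and the constant 4 is independent of a. -/
open MeasureTheory Set

noncomputable section

/-!
Two points of the circle are joined by an arc of length at most one, so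
`|u x| ≤ |u y| + ∫ |u'|` for all `x, y`, and `(∫ |u'|)² ≤ ∫ |u'|²` by Cauchy–Schwarz.
Squaring gives `|u x|² ≤ 2 |u y|² + 2 ∫ |u'|²`; averaging in `y` against the probability
density `a` yields `|u x|² ≤ 2 (∫ |u'|² + ∫ a |u|²)`.
-/

instance isProbabilityMeasure_restrict_Ioc_zero_one :
    IsProbabilityMeasure (volume.restrict (Ioc (0 : ℝ) 1)) :=
  ⟨by simp⟩

lemma sq_integral_norm_le_integral_sq_norm {Ω E : Type*} [MeasurableSpace Ω]
    [NormedAddCommGroup E] {μ : Measure Ω} [IsProbabilityMeasure μ] {f : Ω → E}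
    (hf : MemLp f 2 μ) : (∫ ω, ‖f ω‖ ∂μ) ^ 2 ≤ ∫ ω, ‖f ω‖ ^ 2 ∂μ := by
  have hvar := ProbabilityTheory.variance_eq_sub hf.norm
  have := ProbabilityTheory.variance_nonneg (fun ω => ‖f ω‖) μ
  simp only [Pi.pow_apply] at hvar
  linarith

lemma le_integral_mul_of_ae_le {Ω : Type*} [MeasurableSpace Ω] {μ : Measure Ω}
    {w g : Ω → ℝ} {c : ℝ} (hw : Integrable w μ) (hw_nonneg : ∀ᵐ ω ∂μ, 0 ≤ w ω)
    (hw_one : ∫ ω, w ω ∂μ = 1) (hwg : Integrable (fun ω => w ω * g ω) μ)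
    (hle : ∀ᵐ ω ∂μ, c ≤ g ω) : c ≤ ∫ ω, w ω * g ω ∂μ :=
  calc c = ∫ ω, w ω * c ∂μ := by rw [integral_mul_const, hw_one, one_mul]
    _ ≤ ∫ ω, w ω * g ω ∂μ :=
      integral_mono_ae (hw.mul_const c) hwg <| by
        filter_upwards [hw_nonneg, hle] with ω h0 h
        exact mul_le_mul_of_nonneg_left h h0

section Primitive

variable {E : Type*} [NormedAddCommGroup E] [NormedSpace ℝ E] {u u' : ℝ → E} {a b x y : ℝ}

lemma norm_intervalIntegral_le_setIntegral_norm (hu' : IntegrableOn u' (Ioc a b))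
    (hx : x ∈ Icc a b) (hy : y ∈ Icc a b) :
    ‖∫ t in x..y, u' t‖ ≤ ∫ t in Ioc a b, ‖u' t‖ := by
  have hsub : uIoc x y ⊆ Ioc a b := by
    rw [← uIoc_of_le (hx.1.trans hx.2)]
    exact uIoc_subset_uIoc_of_uIcc_subset_uIcc
      (uIcc_subset_uIcc (Icc_subset_uIcc hx) (Icc_subset_uIcc hy))
  exact intervalIntegral.norm_integral_le_integral_norm_uIoc.trans <|
    setIntegral_mono_set hu'.norm (ae_of_all _ fun _ => norm_nonneg _) (ae_of_all _ hsub)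

lemma sub_eq_intervalIntegral_of_eq_add_integral
    (hprim : ∀ x, u x = u a + ∫ t in a..x, u' t) (hu' : IntegrableOn u' (Ioc a b))
    (hx : x ∈ Icc a b) (hy : y ∈ Icc a b) : u x - u y = ∫ t in y..x, u' t := by
  have hint : ∀ z ∈ Icc a b, IntervalIntegrable u' volume a z := fun z hz =>
    (intervalIntegrable_iff_integrableOn_Ioc_of_le hz.1).2
      (hu'.mono_set (Ioc_subset_Ioc_right hz.2))
  rw [hprim x, hprim y, ← intervalIntegral.integral_interval_sub_left (hint x hx) (hint y hy)]
  abel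

lemma norm_le_norm_add_integral_norm_of_periodic {c : ℝ} (hper : Function.Periodic u c)
    (hc : 0 < c) (hprim : ∀ x, u x = u 0 + ∫ t in (0 : ℝ)..x, u' t)
    (hu' : IntegrableOn u' (Ioc 0 c)) (x : ℝ) (hy : y ∈ Icc 0 c) :
    ‖u x‖ ≤ ‖u y‖ + ∫ t in Ioc 0 c, ‖u' t‖ := by
  obtain ⟨z, hz, hxz⟩ := hper.exists_mem_Ico₀ hc x
  have hdiff := sub_eq_intervalIntegral_of_eq_add_integral hprim hu' (Ico_subset_Icc_self hz) hy
  calc ‖u x‖ = ‖u y + (u z - u y)‖ := by rw [hxz, add_sub_cancel]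
    _ ≤ ‖u y‖ + ‖u z - u y‖ := norm_add_le _ _
    _ ≤ ‖u y‖ + ∫ t in Ioc 0 c, ‖u' t‖ := by
      rw [hdiff]
      gcongr
      exact norm_intervalIntegral_le_setIntegral_norm hu' hy (Ico_subset_Icc_self hz)

end Primitive

theorem statement_4_general (a : ℝ → ℝ) (ha : MemA a)
    (u u' : ℝ → ℂ)
    (hu_per : ∀ x, u (x + 1) = u x)
    (hu_cont : Continuous u)
    (hu_prim : ∀ x, u x = u 0 + ∫ t in (0:ℝ)..x, u' t)
    (hu'_L2 : MemLp u' 2 (volume.restrict (Ioc (0:ℝ) 1))) :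
    ∀ x : ℝ, ‖u x‖ ^ 2
      ≤ 4 * ((∫ x in Ioc (0:ℝ) 1, ‖u' x‖ ^ 2)
              + (∫ x in Ioc (0:ℝ) 1, a x * ‖u x‖ ^ 2)) := by
  obtain ⟨-, -, ha_nonneg, ha_int, ha_one⟩ := ha
  intro x
  set I := ∫ t in Ioc (0:ℝ) 1, ‖u' t‖
  have hpointwise : ∀ y ∈ Ioc (0:ℝ) 1, ‖u x‖ ^ 2 / 2 - I ^ 2 ≤ ‖u y‖ ^ 2 := fun y hy => by
    have h := norm_le_norm_add_integral_norm_of_periodic hu_per one_pos hu_prim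
      (hu'_L2.integrable one_le_two) x (Ioc_subset_Icc_self hy)
    nlinarith [add_sq_le (a := ‖u y‖) (b := I), norm_nonneg (u x)]
  have hau_int : IntegrableOn (fun y => a y * ‖u y‖ ^ 2) (Ioc 0 1) :=
    ha_int.mul_continuousOn_of_subset (hu_cont.norm.pow 2).continuousOn measurableSet_Ioc
      isCompact_Icc Ioc_subset_Icc_self
  have havg : ‖u x‖ ^ 2 / 2 - I ^ 2 ≤ ∫ y in Ioc (0:ℝ) 1, a y * ‖u y‖ ^ 2 :=
    le_integral_mul_of_ae_le ha_int (ae_restrict_of_ae ha_nonneg) ha_one hau_int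
      ((ae_restrict_iff' measurableSet_Ioc).2 (ae_of_all _ hpointwise))
  have hCS : I ^ 2 ≤ ∫ t in Ioc (0:ℝ) 1, ‖u' t‖ ^ 2 :=
    sq_integral_norm_le_integral_sq_norm hu'_L2
  have hau_nonneg : 0 ≤ ∫ y in Ioc (0:ℝ) 1, a y * ‖u y‖ ^ 2 :=
    integral_nonneg_of_ae <| by
      filter_upwards [ae_restrict_of_ae ha_nonneg] with y hy
      exact mul_nonneg hy (sq_nonneg _)
  have hu'_nonneg : 0 ≤ ∫ t in Ioc (0:ℝ) 1, ‖u' t‖ ^ 2 :=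
    integral_nonneg fun _ => sq_nonneg _
  linarith

/-- for `a ∈ 𝒜` and `u : 𝕋 → ℂ` continuous with weak derivative
`u' ∈ L²(𝕋)`, one has `‖u‖²_∞ ≤ 4 (‖u'‖²_{L²} + ∫ a |u|²)`, the constant `4`
being independent of `a`.  (The bound `‖u‖∞² ≤ …` is expressed pointwise.) -/
theorem statement_4 (a : ℝ → ℝ) (ha : MemA a)
    (u u' : ℝ → ℂ)
    (hu_per : ∀ x, u (x + 1) = u x)
    (hu'_per : ∀ x, u' (x + 1) = u' x)
    (hu_cont : Continuous u)
    (hu_prim : ∀ x, u x = u 0 + ∫ t in (0:ℝ)..x, u' t)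
    (hu'_L2 : MemLp u' 2 (volume.restrict (Ioc (0:ℝ) 1))) :
    ∀ x : ℝ, ‖u x‖ ^ 2
      ≤ 4 * ((∫ x in Ioc (0:ℝ) 1, ‖u' x‖ ^ 2)
              + (∫ x in Ioc (0:ℝ) 1, a x * ‖u x‖ ^ 2)) :=
  statement_4_general a ha u u' hu_per hu_cont hu_prim hu'_L2
end
end

section
/- Let a ∈ 𝒜 and ξ ∈ ℝ with ξ ≠ 0. If u is a periodic W^{2,1} function satisfying −u''(x) + iξ a(x) u(x) = 0 for a.e. x, then u ≡ 0. Consequently, for fixed ξ ≠ 0 and a ∈ 𝒜, a periodic W^{2,1} solution of −u'' + iξ a u = h is unique for any h ∈ L¹(𝕋). -/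
open MeasureTheory Set Complex

noncomputable section

/-- A periodic `W^{2,1}` function: a 1-periodic continuously differentiable
`u : ℝ → ℂ` whose derivative is absolutely continuous with (periodic) second
derivative `u'' ∈ L¹(𝕋)`. -/
def IsPeriodicW21 (u u'' : ℝ → ℂ) : Prop :=
  (∀ x, u (x + 1) = u x) ∧ (∀ x, u'' (x + 1) = u'' x) ∧
  ContDiff ℝ 1 u ∧
  (∀ x, deriv u x = deriv u 0 + ∫ t in (0:ℝ)..x, u'' t) ∧
  IntegrableOn u'' (Ioc 0 1)

open ComplexConjugate

/-!
Multiplying the equation by `conj u` and integrating over a period gives, after an integration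
by parts whose boundary terms cancel by periodicity, `-∫ |u'|² = iξ ∫ a |u|²`. The real part
forces `u' = 0`, so `u` is constant; the imaginary part then gives `ξ |u|² ∫ a = 0`, so `u = 0`.
Since `u'` is only known to be a primitive of an `L¹` function, the integration by parts goes
through Fubini's theorem. Uniqueness follows by linearity.
-/

section IntegrationByParts

variable {𝕜 : Type*} [RCLike 𝕜]

theorem intervalIntegral_mul_integral_swap {f g : ℝ → 𝕜} {a b : ℝ} (hab : a ≤ b)
    (hf : IntervalIntegrable f volume a b) (hg : IntervalIntegrable g volume a b) :
    ∫ t in a..b, f t * ∫ s in t..b, g s = ∫ s in a..b, (∫ t in a..s, f t) * g s := by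
  set μ := volume.restrict (Ioc a b)
  have hprod : Integrable (fun p : ℝ × ℝ => {p : ℝ × ℝ | p.1 < p.2}.indicator
      (fun p => f p.1 * g p.2) p) (μ.prod μ) :=
    ((hf.1.mul_prod hg.1).indicator (measurableSet_lt measurable_fst measurable_snd))
  have hswap := integral_integral_swap (f := fun t s => {p : ℝ × ℝ | p.1 < p.2}.indicator
      (fun p => f p.1 * g p.2) (t, s)) hprod
  simp only [intervalIntegral.integral_of_le hab]
  convert hswap using 1
  · refine setIntegral_congr_fun measurableSet_Ioc fun t ht => ?_
    have hset : Ioi t ∩ Ioc a b = Ioc t b := by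
      ext s; constructor
      · rintro ⟨h1, -, h2⟩; exact ⟨h1, h2⟩
      · rintro ⟨h1, h2⟩; exact ⟨h1, ht.1.trans h1, h2⟩
    rw [intervalIntegral.integral_of_le ht.2, ← integral_const_mul, ← hset,
      ← Measure.restrict_restrict measurableSet_Ioi, ← integral_indicator measurableSet_Ioi]
    rfl
  · refine setIntegral_congr_fun measurableSet_Ioc fun s hs => ?_
    have hset : Iio s ∩ Ioc a b = Ioo a s := by
      ext t; constructor
      · rintro ⟨h1, h2, -⟩; exact ⟨h2, h1⟩
      · rintro ⟨h1, h2⟩; exact ⟨h2, h1, h2.le.trans hs.2⟩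
    rw [intervalIntegral.integral_of_le hs.1.le, integral_Ioc_eq_integral_Ioo,
      ← integral_mul_const, ← hset, ← Measure.restrict_restrict measurableSet_Iio,
      ← integral_indicator measurableSet_Iio]
    rfl

theorem intervalIntegral_mul_eq_sub_of_eq_primitive {F G f g : ℝ → 𝕜} {a b : ℝ}
    (hab : a ≤ b) (hf : IntervalIntegrable f volume a b)
    (hF : ∀ x ∈ Icc a b, F x = F a + ∫ t in a..x, f t)
    (hG : ∀ x ∈ Icc a b, HasDerivAt G (g x) x) (hg : IntervalIntegrable g volume a b) :
    ∫ x in a..b, G x * f x = G b * F b - G a * F a - ∫ x in a..b, g x * F x := by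
  rw [← uIcc_of_le hab] at hF hG
  have hGc : ContinuousOn G (uIcc a b) := fun x hx => (hG x hx).continuousAt.continuousWithinAt
  have hFc : ContinuousOn F (uIcc a b) :=
    ((intervalIntegral.continuousOn_primitive_interval' hf left_mem_uIcc).const_add (F a)).congr hF
  have hG_sub (x : ℝ) (hx : x ∈ uIcc a b) : ∫ s in x..b, g s = G b - G x :=
    intervalIntegral.integral_eq_sub_of_hasDerivAt
      (fun y hy => hG y (uIcc_subset_uIcc hx right_mem_uIcc hy))
      (hg.mono_set (uIcc_subset_uIcc hx right_mem_uIcc))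
  have hL : ∫ t in a..b, f t * ∫ s in t..b, g s
      = G b * (F b - F a) - ∫ t in a..b, G t * f t := by
    rw [intervalIntegral.integral_congr (g := fun t => G b * f t - G t * f t)
        (fun t ht => by simp only [hG_sub t ht]; ring),
      intervalIntegral.integral_sub (hf.const_mul _) (hf.continuousOn_mul hGc),
      intervalIntegral.integral_const_mul, hF b right_mem_uIcc]
    ring
  have hR : ∫ s in a..b, (∫ t in a..s, f t) * g s
      = (∫ s in a..b, g s * F s) - F a * (G b - G a) := by
    rw [intervalIntegral.integral_congr (g := fun s => g s * F s - F a * g s)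
        (fun s hs => by simp only [hF s hs]; ring),
      intervalIntegral.integral_sub (hg.mul_continuousOn hFc) (hg.const_mul _),
      intervalIntegral.integral_const_mul, hG_sub a left_mem_uIcc]
  linear_combination hL - hR - intervalIntegral_mul_integral_swap hab hf hg

end IntegrationByParts

theorem Continuous.eqOn_zero_of_intervalIntegral_eq_zero {f : ℝ → ℝ} {a b : ℝ} (hab : a < b)
    (hf : Continuous f) (hf₀ : 0 ≤ f) (h : ∫ x in a..b, f x = 0) : EqOn f 0 (Icc a b) := by
  rw [intervalIntegral.integral_eq_zero_iff_of_le_of_nonneg_ae hab.le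
    (.of_forall hf₀) (hf.intervalIntegrable a b)] at h
  refine Measure.eqOn_Icc_of_ae_eq volume hab.ne ?_ hf.continuousOn continuousOn_const
  rwa [Measure.restrict_congr_set Ioc_ae_eq_Icc] at h

theorem Function.Periodic.deriv {E : Type*} [NormedAddCommGroup E] [NormedSpace ℝ E]
    {f : ℝ → E} {c : ℝ} (hf : Function.Periodic f c) : Function.Periodic (deriv f) c :=
  fun x => by rw [← deriv_comp_add_const, funext hf]

namespace IsPeriodicW21

variable {u u'' : ℝ → ℂ}

theorem integral_conj_mul_eq_neg_integral_norm_deriv_sq (hu : IsPeriodicW21 u u'') :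
    ∫ x in (0:ℝ)..1, conj (u x) * u'' x =
      -((∫ x in (0:ℝ)..1, ‖deriv u x‖ ^ 2 : ℝ) : ℂ) := by
  obtain ⟨hper, -, hC, hrep, hint⟩ := hu
  have hdiff : Differentiable ℝ u := hC.differentiable one_ne_zero
  have hparts := intervalIntegral_mul_eq_sub_of_eq_primitive (G := fun x => conj (u x))
    (g := fun x => conj (deriv u x)) zero_le_one
    ((intervalIntegrable_iff_integrableOn_Ioc_of_le zero_le_one).2 hint)
    (fun x _ => hrep x) (fun x _ => (hdiff x).hasDerivAt.star)
    ((RCLike.continuous_conj.comp (hC.continuous_deriv le_rfl)).intervalIntegrable 0 1)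
  have hu1 : u 1 = u 0 := by simpa using hper 0
  have hd1 : deriv u 1 = deriv u 0 := by simpa using Function.Periodic.deriv hper 0
  rw [hparts, hu1, hd1, sub_self, zero_sub, ← intervalIntegral.integral_ofReal]
  push_cast
  simp only [conj_mul']

theorem sub {v v'' : ℝ → ℂ} (hu : IsPeriodicW21 u u'') (hv : IsPeriodicW21 v v'') :
    IsPeriodicW21 (u - v) (u'' - v'') := by
  obtain ⟨hu_per, hu''_per, hu_C, hu_rep, hu''_int⟩ := hu
  obtain ⟨hv_per, hv''_per, hv_C, hv_rep, hv''_int⟩ := hv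
  refine ⟨fun x => by simp [hu_per, hv_per], fun x => by simp [hu''_per, hv''_per],
    hu_C.sub hv_C, fun x => ?_, hu''_int.sub hv''_int⟩
  have hu_diff : Differentiable ℝ u := hu_C.differentiable one_ne_zero
  have hv_diff : Differentiable ℝ v := hv_C.differentiable one_ne_zero
  have hii (w : ℝ → ℂ) (hw : ∀ x, w (x + 1) = w x) (hwi : IntegrableOn w (Ioc 0 1)) :
      IntervalIntegrable w volume 0 x :=
    Function.Periodic.intervalIntegrable₀ hw one_ne_zero
      ((intervalIntegrable_iff_integrableOn_Ioc_of_le zero_le_one).2 hwi) 0 x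
  rw [deriv_sub (hu_diff x) (hv_diff x), deriv_sub (hu_diff 0) (hv_diff 0), Pi.sub_def,
    intervalIntegral.integral_sub (hii _ hu''_per hu''_int) (hii _ hv''_per hv''_int),
    hu_rep, hv_rep]
  ring

theorem eq_zero_of_ae_solution {a : ℝ → ℝ} (ha : ∫ x in (0:ℝ)..1, a x = 1) {ξ : ℝ}
    (hξ : ξ ≠ 0) (hu : IsPeriodicW21 u u'') (heq : ∀ᵐ x, -u'' x + ξ * I * a x * u x = 0)
    (x : ℝ) : u x = 0 := by
  set q := ∫ x in (0:ℝ)..1, ‖deriv u x‖ ^ 2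
  set r := ∫ x in (0:ℝ)..1, a x * ‖u x‖ ^ 2
  have hqr : -(q : ℂ) = ξ * I * r := by
    rw [← hu.integral_conj_mul_eq_neg_integral_norm_deriv_sq,
      ← intervalIntegral.integral_ofReal, ← intervalIntegral.integral_const_mul]
    refine intervalIntegral.integral_congr_ae (heq.mono fun x hx _ => ?_)
    rw [show u'' x = ξ * I * a x * u x by linear_combination -hx]
    push_cast
    linear_combination (ξ * I * a x) * conj_mul' (u x)
  have hq : q = 0 := by simpa using congrArg re hqr
  have hr : r = 0 := by simpa [hξ] using congrArg im hqr
  have hC := hu.2.2.1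
  have hd : ∀ x, deriv u x = 0 := by
    have h := (continuous_norm.comp (hC.continuous_deriv le_rfl)).pow 2
      |>.eqOn_zero_of_intervalIntegral_eq_zero zero_lt_one (fun _ => sq_nonneg _) hq
    intro x
    obtain ⟨y, hy, hxy⟩ := (Function.Periodic.deriv hu.1).exists_mem_Ico₀ one_pos x
    simpa [hxy] using h (Ico_subset_Icc_self hy)
  have hconst (x : ℝ) : u x = u 0 :=
    is_const_of_deriv_eq_zero (hC.differentiable one_ne_zero) hd x 0
  have hr' : r = ‖u 0‖ ^ 2 := by simp [r, hconst, intervalIntegral.integral_mul_const, ha]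
  rw [hconst x, ← norm_eq_zero, ← sq_eq_zero_iff (M₀ := ℝ), ← hr', hr]

end IsPeriodicW21

/-- for `a ∈ 𝒜` and `ξ ≠ 0`, any periodic `W^{2,1}` solution of
`-u'' + iξ a u = 0` vanishes identically; consequently, for any `h ∈ L¹(𝕋)` a
periodic `W^{2,1}` solution of `-u'' + iξ a u = h` is unique. -/
theorem statement_5 (a : ℝ → ℝ) (ha : MemA a) (ξ : ℝ) (hξ : ξ ≠ 0) :
    (∀ u u'' : ℝ → ℂ, IsPeriodicW21 u u'' →
      (∀ᵐ x : ℝ, -u'' x + (ξ : ℂ) * Complex.I * (a x : ℂ) * u x = 0) →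
      ∀ x, u x = 0) ∧
    (∀ h : ℝ → ℂ, (∀ x, h (x + 1) = h x) → IntegrableOn h (Ioc 0 1) →
      ∀ u₁ u₁'' u₂ u₂'' : ℝ → ℂ,
        IsPeriodicW21 u₁ u₁'' → IsPeriodicW21 u₂ u₂'' →
        (∀ᵐ x : ℝ, -u₁'' x + (ξ : ℂ) * Complex.I * (a x : ℂ) * u₁ x = h x) →
        (∀ᵐ x : ℝ, -u₂'' x + (ξ : ℂ) * Complex.I * (a x : ℂ) * u₂ x = h x) →
        ∀ x, u₁ x = u₂ x) := by
  have ha₁ : ∫ x in (0:ℝ)..1, a x = 1 := by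
    rw [intervalIntegral.integral_of_le zero_le_one]
    exact ha.2.2.2.2
  refine ⟨fun u u'' hu heq => hu.eq_zero_of_ae_solution ha₁ hξ heq, ?_⟩
  intro h _ _ u₁ u₁'' u₂ u₂'' hu₁ hu₂ heq₁ heq₂ x
  refine sub_eq_zero.1 ((hu₁.sub hu₂).eq_zero_of_ae_solution ha₁ hξ ?_ x)
  filter_upwards [heq₁, heq₂] with t h₁ h₂
  simp only [Pi.sub_apply]
  linear_combination h₁ - h₂
end
end

section
/- Let a ∈ 𝒜, ξ ∈ ℝ with ξ ≠ 0, and let f : 𝕋 → ℂ be bounded measurable. If u is a periodic W^{2,1} function with −u'' + iξ a u = a f a.e., then u' ∈ L²(𝕋) (so u ∈ H¹(𝕋)) and ‖u‖_{H¹_a} ≤ (2 / min{1, |ξ|}) [f]_a. -/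
/-!
Test the equation against `ū` over one period. Since `u` and `u'` are periodic, integration by
parts (justified for the `L¹` function `u''` by Fubini on a triangle) gives `-∫ u'' ū = ∫ |u'|²`,
so `∫ |u'|² + iξ ∫ a|u|² = ∫ a f ū =: P`. The real part bounds `∫ |u'|²` and the imaginary part
bounds `|ξ| ∫ a|u|²` by `|P| ≤ ∫ a|f||u|`, whence `min 1 |ξ| · ‖u‖²_{H¹_a} ≤ 2 ∫ a|f||u|`, and
Young's inequality `2xy ≤ εx² + ε⁻¹y²` with `ε = 2 / min 1 |ξ|` absorbs `∫ a|u|²`.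
-/

open MeasureTheory Set Complex

noncomputable section

/-- The seminorm `[f]_a = (∫ a |f|²)^{1/2}`. -/
def seminormA (a : ℝ → ℝ) (f : ℝ → ℂ) : ℝ :=
  Real.sqrt (∫ x in Ioc (0:ℝ) 1, a x * ‖f x‖ ^ 2)

theorem MeasureTheory.IntegrableOn.mul_continuous_of_isBounded {X R : Type*}
    [MeasurableSpace X] [PseudoMetricSpace X] [ProperSpace X] [OpensMeasurableSpace X]
    {μ : Measure X} [NormedRing R] [SecondCountableTopologyEither X R] {f g : X → R} {s : Set X}
    (hf : IntegrableOn f s μ) (hg : Continuous g) (hs : MeasurableSet s)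
    (hsb : Bornology.IsBounded s) : IntegrableOn (fun x => f x * g x) s μ :=
  hf.mul_continuousOn_of_subset hg.continuousOn hs hsb.isCompact_closure subset_closure

theorem Continuous.memLp_restrict_Ioc {E : Type*} [NormedAddCommGroup E] {f : ℝ → E}
    (hf : Continuous f) (p : ENNReal) (a b : ℝ) : MemLp f p (volume.restrict (Ioc a b)) := by
  obtain ⟨C, hC⟩ := isCompact_Icc.exists_bound_of_continuousOn (hf.continuousOn (s := Icc a b))
  exact MemLp.of_bound hf.aestronglyMeasurable C
    (ae_restrict_of_forall_mem measurableSet_Ioc fun x hx => hC x (Ioc_subset_Icc_self hx))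

theorem intervalIntegral.integral_mul_primitive_eq_integral_tail_mul {𝕜 : Type*} [RCLike 𝕜]
    {g h : ℝ → 𝕜} {a b : ℝ} (hab : a ≤ b) (hg : IntegrableOn g (Ioc a b))
    (hh : IntegrableOn h (Ioc a b)) :
    ∫ t in a..b, g t * ∫ s in a..t, h s = ∫ s in a..b, (∫ t in s..b, g t) * h s := by
  -- both sides are the integral of `g t * h s` over the triangle `a < s < t ≤ b`
  set F : ℝ → ℝ → 𝕜 := fun t s => (Ioi s).indicator (fun t => g t * h s) t
  have hF : Integrable (Function.uncurry F)
      ((volume.restrict (Ioc a b)).prod (volume.restrict (Ioc a b))) :=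
    (hg.mul_prod hh).indicator (measurableSet_lt measurable_snd measurable_fst)
  have inner_t : ∀ t ∈ Ioc a b, ∫ s in Ioc a b, F t s = g t * ∫ s in a..t, h s := by
    intro t ht
    have hF_t : (fun s => F t s) = (Iio t).indicator (fun s => g t * h s) := by
      ext s; simp [F, indicator_apply]
    have h_inter : Iio t ∩ Ioc a b = Ioo a t := by grind
    rw [hF_t, MeasureTheory.integral_indicator measurableSet_Iio,
      Measure.restrict_restrict measurableSet_Iio, h_inter, MeasureTheory.integral_const_mul,
      intervalIntegral.integral_of_le ht.1.le, integral_Ioc_eq_integral_Ioo]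
  have inner_s : ∀ s ∈ Ioc a b, ∫ t in Ioc a b, F t s = (∫ t in s..b, g t) * h s := by
    intro s hs
    rw [MeasureTheory.integral_indicator measurableSet_Ioi,
      Measure.restrict_restrict measurableSet_Ioi, inter_comm, Ioc_inter_Ioi, max_eq_right hs.1.le,
      MeasureTheory.integral_mul_const, intervalIntegral.integral_of_le hs.2]
  rw [intervalIntegral.integral_of_le hab, intervalIntegral.integral_of_le hab,
    ← setIntegral_congr_fun measurableSet_Ioc inner_t,
    ← setIntegral_congr_fun measurableSet_Ioc inner_s]
  exact integral_integral_swap hF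

theorem two_mul_integral_mul_norm_mul_norm_le {α E F : Type*} [MeasurableSpace α]
    {μ : Measure α} [NormedAddCommGroup E] [NormedAddCommGroup F] {w : α → ℝ} {f : α → E}
    {g : α → F} (hw : 0 ≤ᵐ[μ] w) (hf : Integrable (fun x => w x * ‖f x‖ ^ 2) μ)
    (hg : Integrable (fun x => w x * ‖g x‖ ^ 2) μ) {ε : ℝ} (hε : 0 < ε) :
    2 * ∫ x, w x * (‖f x‖ * ‖g x‖) ∂μ
      ≤ ε * ∫ x, w x * ‖f x‖ ^ 2 ∂μ + ε⁻¹ * ∫ x, w x * ‖g x‖ ^ 2 ∂μ := by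
  rw [← integral_const_mul, ← integral_const_mul, ← integral_const_mul,
    ← integral_add (hf.const_mul ε) (hg.const_mul ε⁻¹)]
  refine integral_mono_of_nonneg
    (hw.mono fun x hx => mul_nonneg zero_le_two (mul_nonneg hx (by positivity)))
    ((hf.const_mul ε).add (hg.const_mul ε⁻¹)) (hw.mono fun x hx => ?_)
  have h_sq : 0 ≤ w x * ε⁻¹ * (ε * ‖f x‖ - ‖g x‖) ^ 2 :=
    mul_nonneg (mul_nonneg hx (inv_nonneg.2 hε.le)) (sq_nonneg _)
  have h_exp : w x * ε⁻¹ * (ε * ‖f x‖ - ‖g x‖) ^ 2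
      = ε * (w x * ‖f x‖ ^ 2) + ε⁻¹ * (w x * ‖g x‖ ^ 2)
        - 2 * (w x * (‖f x‖ * ‖g x‖)) := by
    field_simp
    ring
  linarith

theorem sqrt_add_le_of_add_mul_I_eq {K U F ξ : ℝ} {P : ℂ} (hξ : ξ ≠ 0) (hK : 0 ≤ K)
    (hU : 0 ≤ U) (hP : (K : ℂ) + ξ * I * U = P)
    (h_young : ∀ ε > 0, 2 * ‖P‖ ≤ ε * F + ε⁻¹ * U) :
    √(K + U) ≤ 2 / min 1 |ξ| * √F := by
  set m := min 1 |ξ|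
  have hm : 0 < m := lt_min one_pos (abs_pos.mpr hξ)
  have hKP : K ≤ ‖P‖ := by
    simpa [← hP] using re_le_norm P
  have hUP : |ξ| * U ≤ ‖P‖ := by
    simpa [← hP, abs_mul, abs_of_nonneg hU] using abs_im_le_norm P
  have h_coercive : m * (K + U) ≤ 2 * ‖P‖ := by
    nlinarith [min_le_left 1 |ξ|, min_le_right 1 |ξ|]
  have h_half : m / 2 * (K + U) ≤ 2 / m * F := by
    have := h_young (2 / m) (by positivity)
    rw [inv_div] at this
    linarith [mul_nonneg hm.le hK]
  have h_sq : K + U ≤ (2 / m) ^ 2 * F :=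
    calc K + U = 2 / m * (m / 2 * (K + U)) := by field_simp
      _ ≤ 2 / m * (2 / m * F) := by gcongr
      _ = (2 / m) ^ 2 * F := by ring
  calc √(K + U) ≤ √((2 / m) ^ 2 * F) := Real.sqrt_le_sqrt h_sq
    _ = 2 / m * √F := by rw [Real.sqrt_mul (sq_nonneg _), Real.sqrt_sq (by positivity)]

open ComplexConjugate

namespace IsPeriodicW21

variable {u u'' : ℝ → ℂ}

theorem integral_mul_conj_eq_neg_integral_norm_deriv_sq (hu : IsPeriodicW21 u u'') :
    ∫ x in Ioc (0:ℝ) 1, u'' x * conj (u x)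
      = -((∫ x in Ioc (0:ℝ) 1, ‖deriv u x‖ ^ 2 : ℝ) : ℂ) := by
  obtain ⟨hu_per, -, hC1, hD_prim, hu''_int⟩ := hu
  set D := deriv u
  have hD_cont : Continuous D := hC1.continuous_deriv le_rfl
  have hD1 : D 1 = D 0 := by
    simpa [funext hu_per] using (deriv_comp_add_const u 1 0).symm
  have hu''_01 : IntervalIntegrable u'' volume 0 1 :=
    (intervalIntegrable_iff_integrableOn_Ioc_of_le zero_le_one).2 hu''_int
  have hconj_prim : ∀ t, ∫ s in (0:ℝ)..t, conj (D s) = conj (u t) - conj (u 0) := fun t =>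
    intervalIntegral.integral_eq_sub_of_hasDerivAt
      (fun x _ => ((hC1.differentiable one_ne_zero) x).hasDerivAt.star)
      ((continuous_conj.comp hD_cont).intervalIntegrable _ _)
  have hu''_zero : ∫ t in (0:ℝ)..1, u'' t = 0 := by
    have := hD_prim 1; rw [hD1] at this; exact left_eq_add.mp this
  have hD_zero : ∫ t in (0:ℝ)..1, D t = 0 := by
    rw [intervalIntegral.integral_deriv_eq_sub
      (fun x _ => (hC1.differentiable one_ne_zero).differentiableAt)
      (hD_cont.intervalIntegrable _ _), show u 1 = u 0 by simpa using hu_per 0, sub_self]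
  have h_tail : ∀ s ∈ Icc (0:ℝ) 1, ∫ t in s..1, u'' t = D 0 - D s := by
    intro s hs
    rw [← uIcc_of_le zero_le_one] at hs
    rw [← intervalIntegral.integral_interval_sub_left hu''_01
      (hu''_01.mono_set (uIcc_subset_uIcc_left hs)), hu''_zero, hD_prim s]
    ring
  rw [intervalIntegral.integral_of_le zero_le_one] at hu''_zero hD_zero
  have hu''_conj : IntegrableOn (fun t => u'' t * conj (u t)) (Ioc 0 1) :=
    hu''_int.mul_continuous_of_isBounded (continuous_conj.comp hC1.continuous) measurableSet_Ioc
      (Metric.isBounded_Ioc 0 1)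
  have hD_conj : Continuous fun t => conj (D t) := continuous_conj.comp hD_cont
  have hD_sq : Continuous fun t => ((‖D t‖ : ℂ) ^ 2) := by fun_prop
  calc ∫ t in Ioc (0:ℝ) 1, u'' t * conj (u t)
      = ∫ t in Ioc (0:ℝ) 1, u'' t * (conj (u t) - conj (u 0)) := by
        simp_rw [mul_sub]
        rw [integral_sub hu''_conj (hu''_int.mul_const _), integral_mul_const, hu''_zero,
          zero_mul, sub_zero]
    _ = ∫ t in (0:ℝ)..1, u'' t * ∫ s in (0:ℝ)..t, conj (D s) := by
        rw [intervalIntegral.integral_of_le zero_le_one]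
        exact setIntegral_congr_fun measurableSet_Ioc fun t _ => by rw [hconj_prim t]
    _ = ∫ s in (0:ℝ)..1, (∫ t in s..1, u'' t) * conj (D s) :=
        intervalIntegral.integral_mul_primitive_eq_integral_tail_mul zero_le_one hu''_int
          hD_conj.integrableOn_Ioc
    _ = ∫ s in Ioc (0:ℝ) 1, (D 0 - D s) * conj (D s) := by
        rw [intervalIntegral.integral_of_le zero_le_one]
        exact setIntegral_congr_fun measurableSet_Ioc fun s hs => by
          rw [h_tail s (Ioc_subset_Icc_self hs)]
    _ = -((∫ x in Ioc (0:ℝ) 1, ‖D x‖ ^ 2 : ℝ) : ℂ) := by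
        simp_rw [sub_mul, Complex.mul_conj']
        rw [integral_sub (hD_conj.integrableOn_Ioc.const_mul _) hD_sq.integrableOn_Ioc,
          integral_const_mul, integral_conj, hD_zero, map_zero, mul_zero, zero_sub,
          neg_inj]
        exact_mod_cast integral_complex_ofReal

theorem integral_norm_deriv_sq_add_mul_I_eq_integral_mul_conj (hu : IsPeriodicW21 u u'')
    {a : ℝ → ℝ} {g : ℝ → ℂ} (ξ : ℝ) (ha : IntegrableOn a (Ioc 0 1))
    (heq : ∀ᵐ x : ℝ, -u'' x + ξ * I * a x * u x = g x) :
    ((∫ x in Ioc (0:ℝ) 1, ‖deriv u x‖ ^ 2 : ℝ) : ℂ)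
        + ξ * I * ((∫ x in Ioc (0:ℝ) 1, a x * ‖u x‖ ^ 2 : ℝ) : ℂ)
      = ∫ x in Ioc (0:ℝ) 1, g x * conj (u x) := by
  have h_parts := hu.integral_mul_conj_eq_neg_integral_norm_deriv_sq
  obtain ⟨-, -, hC1, -, hu''_int⟩ := hu
  have hu_cont : Continuous u := hC1.continuous
  have h_u''u : IntegrableOn (fun x => -(u'' x * conj (u x))) (Ioc 0 1) :=
    (hu''_int.mul_continuous_of_isBounded (continuous_conj.comp hu_cont) measurableSet_Ioc
      (Metric.isBounded_Ioc 0 1)).neg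
  have h_au : IntegrableOn (fun x => ((a x * ‖u x‖ ^ 2 : ℝ) : ℂ)) (Ioc 0 1) :=
    (ha.mul_continuous_of_isBounded (by fun_prop) measurableSet_Ioc
      (Metric.isBounded_Ioc 0 1)).ofReal
  calc _ = ∫ x in Ioc (0:ℝ) 1,
        (-(u'' x * conj (u x)) + ξ * I * ((a x * ‖u x‖ ^ 2 : ℝ) : ℂ)) := by
        rw [integral_add h_u''u (h_au.const_mul _), integral_neg, h_parts, neg_neg,
          integral_const_mul, integral_complex_ofReal]
    _ = ∫ x in Ioc (0:ℝ) 1, g x * conj (u x) := by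
        refine integral_congr_ae ?_
        filter_upwards [ae_restrict_of_ae heq] with x hx
        rw [← hx]
        push_cast
        rw [← Complex.mul_conj']
        ring

end IsPeriodicW21

theorem statement_7_general (a : ℝ → ℝ) (ha : MemA a) (ξ : ℝ) (hξ : ξ ≠ 0)
    (f : ℝ → ℂ) (hf_meas : Measurable f)
    (hf_bdd : ∃ M, ∀ x, ‖f x‖ ≤ M)
    (u u'' : ℝ → ℂ) (hu : IsPeriodicW21 u u'')
    (heq : ∀ᵐ x : ℝ,
      -u'' x + (ξ : ℂ) * Complex.I * (a x : ℂ) * u x = (a x : ℂ) * f x) :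
    MemLp (deriv u) 2 (volume.restrict (Ioc (0:ℝ) 1)) ∧
    Real.sqrt ((∫ x in Ioc (0:ℝ) 1, ‖deriv u x‖ ^ 2)
        + (∫ x in Ioc (0:ℝ) 1, a x * ‖u x‖ ^ 2))
      ≤ (2 / min 1 |ξ|) * seminormA a f := by
  obtain ⟨-, -, ha_nonneg, ha_int, -⟩ := ha
  obtain ⟨M, hM⟩ := hf_bdd
  have ha_nonneg' : 0 ≤ᵐ[volume.restrict (Ioc (0:ℝ) 1)] a := ae_restrict_of_ae ha_nonneg
  have h_af : IntegrableOn (fun x => a x * ‖f x‖ ^ 2) (Ioc 0 1) :=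
    ha_int.mul_bdd (hf_meas.norm.pow_const 2).aestronglyMeasurable
      (ae_of_all _ fun x => by simpa using pow_le_pow_left₀ (norm_nonneg _) (hM x) 2)
  have hC1 : ContDiff ℝ 1 u := hu.2.2.1
  have hu_cont : Continuous u := hC1.continuous
  have h_au : IntegrableOn (fun x => a x * ‖u x‖ ^ 2) (Ioc 0 1) :=
    ha_int.mul_continuous_of_isBounded (by fun_prop)
      measurableSet_Ioc (Metric.isBounded_Ioc 0 1)
  refine ⟨(hC1.continuous_deriv le_rfl).memLp_restrict_Ioc 2 0 1,
    sqrt_add_le_of_add_mul_I_eq hξ (integral_nonneg fun x => sq_nonneg _)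
      (integral_nonneg_of_ae (ha_nonneg'.mono fun x hx => mul_nonneg hx (sq_nonneg _)))
      (hu.integral_norm_deriv_sq_add_mul_I_eq_integral_mul_conj ξ ha_int heq) fun ε hε => ?_⟩
  calc 2 * ‖∫ x in Ioc (0:ℝ) 1, a x * f x * conj (u x)‖
      ≤ 2 * ∫ x in Ioc (0:ℝ) 1, a x * (‖f x‖ * ‖u x‖) := by
        gcongr
        refine (norm_integral_le_integral_norm _).trans_eq (integral_congr_ae ?_)
        filter_upwards [ha_nonneg'] with x hx
        simp [abs_of_nonneg hx, mul_assoc]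
    _ ≤ _ := two_mul_integral_mul_norm_mul_norm_le ha_nonneg' h_af h_au hε

/-- for `a ∈ 𝒜`, `ξ ≠ 0` and `f : 𝕋 → ℂ` bounded measurable, any
periodic `W^{2,1}` solution of `-u'' + iξ a u = a f` satisfies `u' ∈ L²(𝕋)`
(so `u ∈ H¹(𝕋)`) and `‖u‖_{H¹_a} ≤ (2 / min 1 |ξ|) [f]_a`. -/
theorem statement_7 (a : ℝ → ℝ) (ha : MemA a) (ξ : ℝ) (hξ : ξ ≠ 0)
    (f : ℝ → ℂ) (hf_per : ∀ x, f (x + 1) = f x) (hf_meas : Measurable f)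
    (hf_bdd : ∃ M, ∀ x, ‖f x‖ ≤ M)
    (u u'' : ℝ → ℂ) (hu : IsPeriodicW21 u u'')
    (heq : ∀ᵐ x : ℝ,
      -u'' x + (ξ : ℂ) * Complex.I * (a x : ℂ) * u x = (a x : ℂ) * f x) :
    MemLp (deriv u) 2 (volume.restrict (Ioc (0:ℝ) 1)) ∧
    Real.sqrt ((∫ x in Ioc (0:ℝ) 1, ‖deriv u x‖ ^ 2)
        + (∫ x in Ioc (0:ℝ) 1, a x * ‖u x‖ ^ 2))
      ≤ (2 / min 1 |ξ|) * seminormA a f :=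
  statement_7_general a ha ξ hξ f hf_meas hf_bdd u u'' hu heq
end
end

section
/- Let a ∈ 𝒜, ξ ∈ ℝ with ξ ≠ 0, and let f : 𝕋 → ℂ be bounded measurable with ∫ a f = 0. If u is a periodic W^{2,1} function with −u'' + iξ a u = a f a.e., then ‖u‖_∞ ≤ 2 [f]_a, where ‖u‖_∞ = max_{x∈𝕋} |u(x)|. -/
/-!
Integrating the equation over a period kills `u''` and, since `ξ ≠ 0`, leaves `∫ a u = 0`. As `a`
is a probability density, `u t = ∫ a(y) (u t - u y) dy`, so `‖u‖_∞ ≤ ∫ |u'|`. Multiplying the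
equation by `ū` instead, integrating by parts and taking real parts gives
`∫ |u'|² = Re ∫ a f ū ≤ [f]_a [u]_a ≤ [f]_a ‖u‖_∞`, while `(∫ |u'|)² ≤ ∫ |u'|²` by Cauchy–Schwarz.
Together, `‖u‖_∞² ≤ [f]_a ‖u‖_∞`.
-/

open MeasureTheory Set Complex

noncomputable section

open ComplexConjugate

theorem integral_mul_le_sqrt_mul_sqrt {α : Type*} [MeasurableSpace α] {μ : Measure α}
    {f g : α → ℝ} (hf₀ : 0 ≤ᵐ[μ] f) (hg₀ : 0 ≤ᵐ[μ] g) (hf : MemLp f 2 μ) (hg : MemLp g 2 μ) :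
    ∫ x, f x * g x ∂μ ≤ √(∫ x, f x ^ 2 ∂μ) * √(∫ x, g x ^ 2 ∂μ) := by
  have h := integral_mul_le_Lp_mul_Lq_of_nonneg Real.HolderConjugate.two_two hf₀ hg₀
    (by simpa using hf) (by simpa using hg)
  simp only [Real.rpow_two, Real.sqrt_eq_rpow] at h ⊢
  norm_num at h ⊢
  exact h

theorem integral_le_sqrt_integral_sq {α : Type*} [MeasurableSpace α] {μ : Measure α}
    [IsProbabilityMeasure μ] {g : α → ℝ} (hg₀ : 0 ≤ᵐ[μ] g) (hg : MemLp g 2 μ) :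
    ∫ x, g x ∂μ ≤ √(∫ x, g x ^ 2 ∂μ) := by
  simpa using integral_mul_le_sqrt_mul_sqrt hg₀ (ae_of_all μ fun _ => zero_le_one)
    hg (memLp_const (1 : ℝ))

theorem integral_mul_mul_le_sqrt_mul_sqrt {α : Type*} [MeasurableSpace α] {μ : Measure α}
    {w f g : α → ℝ} (hw₀ : 0 ≤ᵐ[μ] w) (hf₀ : 0 ≤ᵐ[μ] f) (hg₀ : 0 ≤ᵐ[μ] g)
    (hw : AEMeasurable w μ) (hf : AEMeasurable f μ) (hg : AEMeasurable g μ)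
    (hwf : Integrable (fun x => w x * f x ^ 2) μ) (hwg : Integrable (fun x => w x * g x ^ 2) μ) :
    ∫ x, w x * f x * g x ∂μ ≤ √(∫ x, w x * f x ^ 2 ∂μ) * √(∫ x, w x * g x ^ 2 ∂μ) := by
  have hsq (h : α → ℝ) : (fun x => w x * h x ^ 2) =ᵐ[μ] fun x => (√(w x) * h x) ^ 2 := by
    filter_upwards [hw₀] with x hx
    rw [mul_pow, Real.sq_sqrt hx]
  have hnonneg {h : α → ℝ} (h₀ : 0 ≤ᵐ[μ] h) : 0 ≤ᵐ[μ] fun x => √(w x) * h x :=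
    h₀.mono fun x hx => mul_nonneg (Real.sqrt_nonneg _) hx
  have hmemLp {h : α → ℝ} (hm : AEMeasurable h μ) (hi : Integrable (fun x => w x * h x ^ 2) μ) :
      MemLp (fun x => √(w x) * h x) 2 μ :=
    (memLp_two_iff_integrable_sq (hw.sqrt.mul hm).aestronglyMeasurable).2 (hi.congr (hsq h))
  have hprod : (fun x => w x * f x * g x) =ᵐ[μ] fun x => (√(w x) * f x) * (√(w x) * g x) := by
    filter_upwards [hw₀] with x hx
    rw [mul_mul_mul_comm, Real.mul_self_sqrt hx, mul_assoc]
  rw [integral_congr_ae hprod, integral_congr_ae (hsq f), integral_congr_ae (hsq g)]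
  exact integral_mul_le_sqrt_mul_sqrt (hnonneg hf₀) (hnonneg hg₀) (hmemLp hf hwf) (hmemLp hg hwg)

theorem norm_le_of_integral_smul_eq_zero {α E : Type*} [MeasurableSpace α] [NormedAddCommGroup E]
    [NormedSpace ℝ E] [CompleteSpace E] {μ : Measure α} {w : α → ℝ} {g : α → E} {z : E} {L : ℝ}
    (hw₀ : 0 ≤ᵐ[μ] w) (hw : Integrable w μ) (hw₁ : ∫ x, w x ∂μ = 1)
    (hwg : Integrable (fun x => w x • g x) μ) (hmean : ∫ x, w x • g x ∂μ = 0)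
    (hL : ∀ᵐ x ∂μ, ‖z - g x‖ ≤ L) : ‖z‖ ≤ L := by
  have hz : z = ∫ x, w x • (z - g x) ∂μ := by
    simp_rw [smul_sub]
    rw [integral_sub (hw.smul_const z) hwg, integral_smul_const, hw₁, hmean, one_smul, sub_zero]
  calc ‖z‖ = ‖∫ x, w x • (z - g x) ∂μ‖ := by rw [← hz]
    _ ≤ ∫ x, w x * L ∂μ := by
      refine norm_integral_le_of_norm_le (hw.mul_const L) ?_
      filter_upwards [hw₀, hL] with x hx hxL
      rw [norm_smul, Real.norm_of_nonneg hx]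
      exact mul_le_mul_of_nonneg_left hxL hx
    _ = L := by rw [integral_mul_const, hw₁, one_mul]

theorem integral_mul_integral_Ioc_swap {𝕜 : Type*} [RCLike 𝕜] {g h : ℝ → 𝕜} {a b : ℝ}
    (hg : IntegrableOn g (Ioc a b)) (hh : IntegrableOn h (Ioc a b)) :
    ∫ t in Ioc a b, g t * ∫ s in Ioc t b, h s = ∫ s in Ioc a b, (∫ t in Ioc a s, g t) * h s := by
  set F : ℝ → ℝ → 𝕜 := fun t s => if t < s then g t * h s else 0
  have hF : Integrable (Function.uncurry F)
      ((volume.restrict (Ioc a b)).prod (volume.restrict (Ioc a b))) := by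
    have : Function.uncurry F = {p : ℝ × ℝ | p.1 < p.2}.indicator fun p => g p.1 * h p.2 := by
      ext ⟨t, s⟩; simp [F, indicator_apply]
    rw [this]
    exact (hg.mul_prod hh).indicator (measurableSet_lt measurable_fst measurable_snd)
  have hleft : ∀ t ∈ Ioc a b, ∫ s in Ioc a b, F t s = g t * ∫ s in Ioc t b, h s := by
    intro t ht
    have hF_t : F t = (Ioi t).indicator fun s => g t * h s := by
      ext s; simp [F, indicator_apply]
    rw [hF_t, setIntegral_indicator measurableSet_Ioi, Ioc_inter_Ioi, max_eq_right ht.1.le,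
      integral_const_mul]
  have hright : ∀ s ∈ Ioc a b, ∫ t in Ioc a b, F t s = (∫ t in Ioc a s, g t) * h s := by
    intro s hs
    have hF_s : (fun t => F t s) = (Iio s).indicator fun t => g t * h s := by
      ext t; simp [F, indicator_apply]
    have hIoo : Ioc a b ∩ Iio s = Ioo a s := by
      ext t; simp only [mem_inter_iff, mem_Ioc, mem_Iio, mem_Ioo]; grind
    rw [hF_s, setIntegral_indicator measurableSet_Iio, integral_mul_const, hIoo,
      integral_Ioc_eq_integral_Ioo]
  calc ∫ t in Ioc a b, g t * ∫ s in Ioc t b, h s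
      = ∫ t in Ioc a b, ∫ s in Ioc a b, F t s :=
        (setIntegral_congr_fun measurableSet_Ioc hleft).symm
    _ = ∫ s in Ioc a b, ∫ t in Ioc a b, F t s := integral_integral_swap hF
    _ = ∫ s in Ioc a b, (∫ t in Ioc a s, g t) * h s :=
        setIntegral_congr_fun measurableSet_Ioc hright

-- `W` is only a primitive of `g`, so there is no product rule for `W * V`; Fubini on the
-- triangle `t < s` replaces it.
theorem integral_mul_eq_sub_of_eq_add_integral {𝕜 : Type*} [RCLike 𝕜] {g W V v : ℝ → 𝕜} {a b : ℝ}
    (hab : a ≤ b) (hg : IntervalIntegrable g volume a b)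
    (hW : ∀ x ∈ Icc a b, W x = W a + ∫ t in a..x, g t)
    (hV : ∀ x ∈ Icc a b, HasDerivAt V (v x) x) (hv : IntervalIntegrable v volume a b) :
    ∫ x in a..b, g x * V x = W b * V b - W a * V a - ∫ x in a..b, W x * v x := by
  have hg' := (intervalIntegrable_iff_integrableOn_Ioc_of_le hab).1 hg
  have hv' := (intervalIntegrable_iff_integrableOn_Ioc_of_le hab).1 hv
  have hWcont : ContinuousOn W (Icc a b) := by
    have h := intervalIntegral.continuousOn_primitive_interval
      (uIcc_of_le hab ▸ (intervalIntegrable_iff_integrableOn_Icc_of_le hab).1 hg)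
    rw [uIcc_of_le hab] at h
    exact (continuousOn_const.add h).congr hW
  have hVcont : ContinuousOn V (Icc a b) := fun x hx => (hV x hx).continuousAt.continuousWithinAt
  have hhead : ∀ s ∈ Icc a b, ∫ t in Ioc a s, g t = W s - W a := fun s hs => by
    rw [← intervalIntegral.integral_of_le hs.1, hW s hs]; ring
  have htail : ∀ t ∈ Icc a b, ∫ s in Ioc t b, v s = V b - V t := fun t ht => by
    rw [← intervalIntegral.integral_of_le ht.2]
    refine intervalIntegral.integral_eq_sub_of_hasDerivAt (fun x hx => hV x ?_) ?_
    · rw [uIcc_of_le ht.2] at hx; exact ⟨ht.1.trans hx.1, hx.2⟩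
    · exact hv.mono_set (by rw [uIcc_of_le ht.2, uIcc_of_le hab]; exact Icc_subset_Icc ht.1 le_rfl)
  have hswap := integral_mul_integral_Ioc_swap hg' hv'
  have hleft : ∫ t in Ioc a b, g t * ∫ s in Ioc t b, v s = ∫ t in Ioc a b, g t * (V b - V t) :=
    setIntegral_congr_fun measurableSet_Ioc fun t ht => by rw [htail t (Ioc_subset_Icc_self ht)]
  have hright : ∫ s in Ioc a b, (∫ t in Ioc a s, g t) * v s = ∫ s in Ioc a b, (W s - W a) * v s :=
    setIntegral_congr_fun measurableSet_Ioc fun s hs => by rw [hhead s (Ioc_subset_Icc_self hs)]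
  rw [hleft, hright] at hswap
  have hgV : IntegrableOn (fun x => g x * V x) (Ioc a b) :=
    hg'.mul_continuousOn_of_subset hVcont measurableSet_Ioc isCompact_Icc Ioc_subset_Icc_self
  have hWv : IntegrableOn (fun x => W x * v x) (Ioc a b) :=
    (((intervalIntegrable_iff_integrableOn_Icc_of_le hab).1 hv).continuousOn_mul hWcont
      isCompact_Icc).mono_set Ioc_subset_Icc_self
  simp_rw [mul_sub, sub_mul] at hswap
  rw [integral_sub (hg'.mul_const _) hgV, integral_sub hWv (hv'.const_mul _), integral_mul_const,
    integral_const_mul, hhead b (right_mem_Icc.2 hab), htail a (left_mem_Icc.2 hab)] at hswap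
  rw [intervalIntegral.integral_of_le hab, intervalIntegral.integral_of_le hab]
  linear_combination -hswap

theorem norm_sub_le_integral_norm_deriv {E : Type*} [NormedAddCommGroup E] [NormedSpace ℝ E]
    [CompleteSpace E] {u : ℝ → E} {a b s t : ℝ} (hu : ContDiff ℝ 1 u) (hs : s ∈ Icc a b)
    (ht : t ∈ Icc a b) : ‖u t - u s‖ ≤ ∫ x in Ioc a b, ‖deriv u x‖ := by
  have hderiv := hu.continuous_deriv le_rfl
  rw [← intervalIntegral.integral_deriv_eq_sub
    (fun x _ => (hu.differentiable one_ne_zero).differentiableAt) (hderiv.intervalIntegrable s t)]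
  refine intervalIntegral.norm_integral_le_integral_norm_uIoc.trans (setIntegral_mono_set
    hderiv.norm.integrableOn_Ioc (ae_of_all _ fun _ => norm_nonneg _) ?_)
  exact (Ioc_subset_Ioc (le_min hs.1 ht.1) (max_le hs.2 ht.2)).eventuallyLE

section Solution

variable {a : ℝ → ℝ} {f u u'' : ℝ → ℂ}

theorem MemA.integrableOn_mul {g : ℝ → ℂ} (ha : MemA a) (hg : Continuous g) :
    IntegrableOn (fun x => (a x : ℂ) * g x) (Ioc 0 1) :=
  IntegrableOn.mul_continuousOn_of_subset ha.2.2.2.1.ofReal hg.continuousOn measurableSet_Ioc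
    isCompact_Icc Ioc_subset_Icc_self

theorem MemA.sqrt_integral_mul_norm_sq_le {L : ℝ} (ha : MemA a) (hu : Continuous u)
    (hL : ∀ x, ‖u x‖ ≤ L) : √(∫ x in Ioc (0:ℝ) 1, a x * ‖u x‖ ^ 2) ≤ L := by
  obtain ⟨-, -, ha₀, ha_int, ha₁⟩ := ha
  refine (Real.sqrt_le_left ((norm_nonneg _).trans (hL 0))).2 ?_
  calc ∫ x in Ioc (0:ℝ) 1, a x * ‖u x‖ ^ 2
      ≤ ∫ x in Ioc (0:ℝ) 1, a x * L ^ 2 := by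
        refine integral_mono_ae (ha_int.mul_continuousOn_of_subset (hu.norm.pow 2).continuousOn
          measurableSet_Ioc isCompact_Icc Ioc_subset_Icc_self) (ha_int.mul_const _) ?_
        filter_upwards [ae_restrict_of_ae ha₀] with x hx
        exact mul_le_mul_of_nonneg_left (pow_le_pow_left₀ (norm_nonneg _) (hL x) 2) hx
    _ = L ^ 2 := by rw [integral_mul_const, ha₁, one_mul]

theorem MemA.norm_integral_mul_mul_conj_le (ha : MemA a) (hf_meas : Measurable f)
    (hf_bdd : ∃ M, ∀ x, ‖f x‖ ≤ M) (hu : Continuous u) :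
    ‖∫ x in Ioc (0:ℝ) 1, (a x : ℂ) * f x * conj (u x)‖
      ≤ seminormA a f * √(∫ x in Ioc (0:ℝ) 1, a x * ‖u x‖ ^ 2) := by
  obtain ⟨M, hM⟩ := hf_bdd
  obtain ⟨ha_meas, -, ha₀, ha_int, -⟩ := ha
  replace ha₀ := ae_restrict_of_ae (s := Ioc (0:ℝ) 1) ha₀
  have hnorm : ∫ x in Ioc (0:ℝ) 1, ‖(a x : ℂ) * f x * conj (u x)‖
      = ∫ x in Ioc (0:ℝ) 1, a x * ‖f x‖ * ‖u x‖ := by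
    refine integral_congr_ae ?_
    filter_upwards [ha₀] with x hx
    rw [norm_mul, norm_mul, Complex.norm_real, Real.norm_of_nonneg hx, RCLike.norm_conj]
  have haf : IntegrableOn (fun x => a x * ‖f x‖ ^ 2) (Ioc 0 1) :=
    ha_int.mul_bdd (hf_meas.norm.pow_const 2).aestronglyMeasurable
      (ae_of_all _ fun x => by
        rw [Real.norm_of_nonneg (by positivity)]
        exact pow_le_pow_left₀ (norm_nonneg _) (hM x) 2)
  have hau : IntegrableOn (fun x => a x * ‖u x‖ ^ 2) (Ioc 0 1) :=
    ha_int.mul_continuousOn_of_subset (hu.norm.pow 2).continuousOn measurableSet_Ioc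
      isCompact_Icc Ioc_subset_Icc_self
  calc ‖∫ x in Ioc (0:ℝ) 1, (a x : ℂ) * f x * conj (u x)‖
      ≤ ∫ x in Ioc (0:ℝ) 1, a x * ‖f x‖ * ‖u x‖ := hnorm ▸ norm_integral_le_integral_norm _
    _ ≤ _ := integral_mul_mul_le_sqrt_mul_sqrt ha₀ (ae_of_all _ fun _ => norm_nonneg _)
        (ae_of_all _ fun _ => norm_nonneg _) ha_meas.aemeasurable hf_meas.norm.aemeasurable
        hu.norm.aemeasurable haf hau

theorem norm_le_integral_norm_deriv (ha : MemA a) (hper : Function.Periodic u 1)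
    (hu : ContDiff ℝ 1 u) (hmean : ∫ x in Ioc (0:ℝ) 1, (a x : ℂ) * u x = 0) (x : ℝ) :
    ‖u x‖ ≤ ∫ x in Ioc (0:ℝ) 1, ‖deriv u x‖ := by
  obtain ⟨y, hy, hxy⟩ := hper.exists_mem_Ico₀ one_pos x
  rw [hxy]
  refine norm_le_of_integral_smul_eq_zero (μ := volume.restrict (Ioc 0 1)) (g := u)
    (ae_restrict_of_ae ha.2.2.1) ha.2.2.2.1 ha.2.2.2.2 ?_ ?_ ?_
  · simp only [Complex.real_smul]
    exact ha.integrableOn_mul hu.continuous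
  · simpa only [Complex.real_smul] using hmean
  · filter_upwards [ae_restrict_mem measurableSet_Ioc] with z hz
    exact norm_sub_le_integral_norm_deriv hu (Ioc_subset_Icc_self hz) (Ico_subset_Icc_self hy)

theorem IsPeriodicW21.periodic_deriv (hu : IsPeriodicW21 u u'') : Function.Periodic (deriv u) 1 :=
  fun x => by rw [← deriv_comp_add_const, funext hu.1]

theorem IsPeriodicW21.integral_eq_zero (hu : IsPeriodicW21 u u'') :
    ∫ x in Ioc (0:ℝ) 1, u'' x = 0 := by
  have hper := hu.periodic_deriv 0
  rw [zero_add] at hper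
  rw [← intervalIntegral.integral_of_le zero_le_one]
  linear_combination hper - hu.2.2.2.1 1

theorem IsPeriodicW21.integral_mul_conj (hu : IsPeriodicW21 u u'') :
    ∫ x in Ioc (0:ℝ) 1, u'' x * conj (u x) = -((∫ x in Ioc (0:ℝ) 1, ‖deriv u x‖ ^ 2 : ℝ) : ℂ) := by
  have hw₁ : deriv u 1 = deriv u 0 := by simpa using hu.periodic_deriv 0
  obtain ⟨hper, -, hC1, hFTC, hint⟩ := hu
  have hd : ∀ x, HasDerivAt u (deriv u x) x := fun x =>
    ((hC1.differentiable one_ne_zero) x).hasDerivAt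
  have hparts := integral_mul_eq_sub_of_eq_add_integral (W := deriv u)
    (V := fun x => conj (u x)) (v := fun x => conj (deriv u x)) zero_le_one
    ((intervalIntegrable_iff_integrableOn_Ioc_of_le zero_le_one).2 hint) (fun x _ => hFTC x)
    (fun x _ => (hd x).star) ((hC1.continuous_deriv le_rfl).star.intervalIntegrable 0 1)
  have hu₁ : u 1 = u 0 := by simpa using hper 0
  simp only [hu₁, hw₁, sub_self, zero_sub, mul_conj', ← ofReal_pow,
    intervalIntegral.integral_of_le zero_le_one] at hparts
  exact hparts.trans (congrArg Neg.neg integral_ofReal)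

theorem integral_mul_eq_zero_of_solution {ξ : ℝ} (ha : MemA a) (hξ : ξ ≠ 0)
    (hf_mean : ∫ x in Ioc (0:ℝ) 1, (a x : ℂ) * f x = 0) (hu : IsPeriodicW21 u u'')
    (heq : ∀ᵐ x : ℝ, -u'' x + (ξ : ℂ) * I * (a x : ℂ) * u x = (a x : ℂ) * f x) :
    ∫ x in Ioc (0:ℝ) 1, (a x : ℂ) * u x = 0 := by
  have h := integral_congr_ae (ae_restrict_of_ae (s := Ioc (0:ℝ) 1) heq)
  have hassoc : ∀ x, -u'' x + (ξ : ℂ) * I * (a x : ℂ) * u x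
      = -u'' x + ((ξ : ℂ) * I) * ((a x : ℂ) * u x) := fun x => by ring
  simp_rw [hassoc] at h
  rw [integral_add (f := fun x => -u'' x) hu.2.2.2.2.neg
      ((ha.integrableOn_mul hu.2.2.1.continuous).const_mul _),
    integral_neg, integral_const_mul, hu.integral_eq_zero, hf_mean, neg_zero, zero_add] at h
  exact (mul_eq_zero.1 h).resolve_left (mul_ne_zero (ofReal_ne_zero.2 hξ) I_ne_zero)

theorem integral_norm_deriv_sq_eq_re_of_solution {ξ : ℝ} (ha : MemA a) (hu : IsPeriodicW21 u u'')
    (heq : ∀ᵐ x : ℝ, -u'' x + (ξ : ℂ) * I * (a x : ℂ) * u x = (a x : ℂ) * f x) :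
    ∫ x in Ioc (0:ℝ) 1, ‖deriv u x‖ ^ 2
      = (∫ x in Ioc (0:ℝ) 1, (a x : ℂ) * f x * conj (u x)).re := by
  have hcont := hu.2.2.1.continuous
  have hu''u : IntegrableOn (fun x => u'' x * conj (u x)) (Ioc 0 1) :=
    hu.2.2.2.2.mul_continuousOn_of_subset hcont.star.continuousOn measurableSet_Ioc isCompact_Icc
      Ioc_subset_Icc_self
  have hmul : ∀ᵐ x ∂volume.restrict (Ioc (0:ℝ) 1),
      (-u'' x + (ξ : ℂ) * I * (a x : ℂ) * u x) * conj (u x) = (a x : ℂ) * f x * conj (u x) := by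
    filter_upwards [ae_restrict_of_ae heq] with x hx
    rw [hx]
  have hafu : IntegrableOn (fun x => (a x : ℂ) * f x * conj (u x)) (Ioc 0 1) := by
    refine Integrable.congr ?_ hmul
    have hsum : IntegrableOn (fun x => -u'' x + (ξ : ℂ) * I * (a x : ℂ) * u x) (Ioc 0 1) := by
      simpa only [Pi.add_def, Pi.neg_apply, mul_assoc] using
        hu.2.2.2.2.neg.add ((ha.integrableOn_mul hcont).const_mul ((ξ : ℂ) * I))
    exact hsum.mul_continuousOn_of_subset hcont.star.continuousOn measurableSet_Ioc isCompact_Icc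
      Ioc_subset_Icc_self
  have hre : ∀ᵐ x ∂volume.restrict (Ioc (0:ℝ) 1),
      -(u'' x * conj (u x)).re = ((a x : ℂ) * f x * conj (u x)).re := by
    filter_upwards [hmul] with x hx
    have himag : (ξ : ℂ) * I * a x * u x * conj (u x) = ((ξ * a x * ‖u x‖ ^ 2 : ℝ) : ℂ) * I := by
      rw [mul_assoc _ (u x), mul_conj']
      push_cast
      ring
    rw [← hx, add_mul, neg_mul, himag, add_re, neg_re, mul_I_re, ofReal_im, neg_zero, add_zero]
  calc ∫ x in Ioc (0:ℝ) 1, ‖deriv u x‖ ^ 2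
      = -(∫ x in Ioc (0:ℝ) 1, u'' x * conj (u x)).re := by
        rw [hu.integral_mul_conj]; simp
    _ = ∫ x in Ioc (0:ℝ) 1, -(u'' x * conj (u x)).re := by
        rw [integral_neg]; exact congrArg Neg.neg (integral_re hu''u).symm
    _ = ∫ x in Ioc (0:ℝ) 1, ((a x : ℂ) * f x * conj (u x)).re := integral_congr_ae hre
    _ = (∫ x in Ioc (0:ℝ) 1, (a x : ℂ) * f x * conj (u x)).re := integral_re hafu

end Solution

theorem statement_8_general (a : ℝ → ℝ) (ha : MemA a) (ξ : ℝ) (hξ : ξ ≠ 0)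
    (f : ℝ → ℂ) (hf_meas : Measurable f)
    (hf_bdd : ∃ M, ∀ x, ‖f x‖ ≤ M)
    (hf_mean : (∫ x in Ioc (0:ℝ) 1, (a x : ℂ) * f x) = 0)
    (u u'' : ℝ → ℂ) (hu : IsPeriodicW21 u u'')
    (heq : ∀ᵐ x : ℝ,
      -u'' x + (ξ : ℂ) * Complex.I * (a x : ℂ) * u x = (a x : ℂ) * f x) :
    ∀ x, ‖u x‖ ≤ 2 * seminormA a f := by
  have hC1 : ContDiff ℝ 1 u := hu.2.2.1
  have hcont : Continuous u := hC1.continuous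
  set L := ∫ x in Ioc (0:ℝ) 1, ‖deriv u x‖
  set E := ∫ x in Ioc (0:ℝ) 1, ‖deriv u x‖ ^ 2
  have hbound : ∀ x, ‖u x‖ ≤ L := norm_le_integral_norm_deriv ha hu.1 hC1
    (integral_mul_eq_zero_of_solution ha hξ hf_mean hu heq)
  have hLE : L ≤ √E := by
    have : IsProbabilityMeasure (volume.restrict (Ioc (0:ℝ) 1)) := ⟨by simp⟩
    have hderiv := (hC1.continuous_deriv le_rfl).norm
    exact integral_le_sqrt_integral_sq (ae_of_all _ fun _ => norm_nonneg _)
      ((memLp_two_iff_integrable_sq hderiv.aestronglyMeasurable).2 (hderiv.pow 2).integrableOn_Ioc)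
  have hE : E ≤ seminormA a f * √E := calc
    E = (∫ x in Ioc (0:ℝ) 1, (a x : ℂ) * f x * conj (u x)).re :=
        integral_norm_deriv_sq_eq_re_of_solution ha hu heq
    _ ≤ ‖∫ x in Ioc (0:ℝ) 1, (a x : ℂ) * f x * conj (u x)‖ := re_le_norm _
    _ ≤ seminormA a f * √(∫ x in Ioc (0:ℝ) 1, a x * ‖u x‖ ^ 2) :=
        ha.norm_integral_mul_mul_conj_le hf_meas hf_bdd hcont
    _ ≤ seminormA a f * √E := mul_le_mul_of_nonneg_left
        ((ha.sqrt_integral_mul_norm_sq_le hcont hbound).trans hLE) (Real.sqrt_nonneg _)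
  have hF₀ : 0 ≤ seminormA a f := Real.sqrt_nonneg _
  have hF : √E ≤ seminormA a f := by
    nlinarith [Real.mul_self_sqrt (integral_nonneg fun x => sq_nonneg ‖deriv u x‖ : 0 ≤ E),
      Real.sqrt_nonneg E]
  intro x
  linarith [hbound x]

/-- for `a ∈ 𝒜`, `ξ ≠ 0` and `f : 𝕋 → ℂ` bounded measurable with
`∫ a f = 0`, any periodic `W^{2,1}` solution of `-u'' + iξ a u = a f` satisfies
`‖u‖_∞ ≤ 2 [f]_a`.  (The sup-norm bound is expressed pointwise.) -/
theorem statement_8 (a : ℝ → ℝ) (ha : MemA a) (ξ : ℝ) (hξ : ξ ≠ 0)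
    (f : ℝ → ℂ) (hf_per : ∀ x, f (x + 1) = f x) (hf_meas : Measurable f)
    (hf_bdd : ∃ M, ∀ x, ‖f x‖ ≤ M)
    (hf_mean : (∫ x in Ioc (0:ℝ) 1, (a x : ℂ) * f x) = 0)
    (u u'' : ℝ → ℂ) (hu : IsPeriodicW21 u u'')
    (heq : ∀ᵐ x : ℝ,
      -u'' x + (ξ : ℂ) * Complex.I * (a x : ℂ) * u x = (a x : ℂ) * f x) :
    ∀ x, ‖u x‖ ≤ 2 * seminormA a f :=
  statement_8_general a ha ξ hξ f hf_meas hf_bdd hf_mean u u'' hu heq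
end
end

section
/- Let W ∈ 𝒲, i.e. W : ℝ → ℝ is right-continuous, increasing, W(0) = 0, W(x+1) = W(x) + 1, and the Lebesgue measure on 𝕋 is absolutely continuous with respect to the probability measure μ associated to W. Let w(s) = sup{r : W(r) ≤ s} be the generalized inverse of W. Then w is absolutely continuous on [0,1]; in particular, w is continuous, nondecreasing, and has the Lusin property: for every measurable set E ⊆ [0,1] of Lebesgue measure zero, the image w(E) has Lebesgue measure zero. -/
/-! Lebesgue measure is absolutely continuous with respect to the measure `μ` of `W`, so `W` is
strictly increasing and the supremum `w` is the lower adjoint of `W`: `w s ≤ r ↔ s ≤ W r`.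
Hence `w` pushes Lebesgue measure forward to `μ` and `μ (w a, w b) ≤ b - a`. Lebesgue measure
restricted to `[w 0, w 1]` is finite and absolutely continuous with respect to `μ`, so it is
uniformly small on sets of small `μ`-measure; applied to the union of the disjoint intervals
`(w αᵢ, w βᵢ)` this is the absolute continuity of `w`. For the Lusin property, `W (w s) = s`
unless `w s` is one of the countably many jumps of `W`, so off those jumps `w '' E` lies in
`W ⁻¹' E`, whose `μ`-measure is at most the Lebesgue measure of `E`. -/

open MeasureTheory Set

noncomputable section

/-- `W ∈ 𝒲`: a right-continuous increasing function (bundled as a Stieltjes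
function) with `W 0 = 0`, `W (x+1) = W x + 1`, whose associated measure `μ`
(with `μ((a,b]) = W b - W a`) is such that Lebesgue measure is absolutely
continuous with respect to it. -/
def MemW (W : StieltjesFunction ℝ) : Prop :=
  W 0 = 0 ∧ (∀ x, W (x + 1) = W x + 1) ∧ volume ≪ W.measure

open Filter Function

theorem Monotone.disjoint_Ioo_map {α β : Type*} [LinearOrder α] [DenselyOrdered α]
    [LinearOrder β] [DenselyOrdered β] {f : α → β} (hf : Monotone f) {a b c d : α}
    (h : Disjoint (Ioo a b) (Ioo c d)) : Disjoint (Ioo (f a) (f b)) (Ioo (f c) (f d)) := by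
  rw [Ioo_disjoint_Ioo] at h ⊢
  simpa only [hf.map_min, hf.map_max] using hf h

theorem MeasureTheory.Measure.AbsolutelyContinuous.exists_pos_forall_measure_lt
    {α : Type*} [MeasurableSpace α] {μ ν : Measure α} [SigmaFinite μ] [IsFiniteMeasure ν]
    (h : ν ≪ μ) {ε : ENNReal} (hε : ε ≠ 0) :
    ∃ δ > 0, ∀ s, MeasurableSet s → μ s < δ → ν s < ε := by
  obtain ⟨δ, hδ, hlt⟩ :=
    exists_pos_setLIntegral_lt_of_measure_lt (Measure.lintegral_rnDeriv_lt_top ν μ).ne hε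
  exact ⟨δ, hδ, fun s hs hμs => Measure.setLIntegral_rnDeriv' h hs ▸ hlt s hμs⟩

namespace StieltjesFunction

variable {W : StieltjesFunction ℝ}

theorem strictMono_of_volume_absolutelyContinuous (hac : volume ≪ W.measure) :
    StrictMono W := by
  intro a b hab
  by_contra! h
  have hnull : W.measure (Ioo a b) = 0 := by
    rw [W.measure_Ioo, ENNReal.ofReal_eq_zero, sub_nonpos]
    exact (W.mono.leftLim_le le_rfl).trans h
  exact hab.not_ge (by simpa using hac hnull)

theorem gc_sSup_setOf_le (htop : Tendsto W atTop atTop) (hbot : Tendsto W atBot atBot)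
    (hW : StrictMono W) : GaloisConnection (fun s => sSup {r | W r ≤ s}) W := by
  intro s r
  have hne : {r | W r ≤ s}.Nonempty := (hbot.eventually (eventually_le_atBot s)).exists
  have hbdd : BddAbove {r | W r ≤ s} := by
    obtain ⟨R, hR⟩ := eventually_atTop.1 (htop.eventually (eventually_gt_atTop s))
    exact ⟨R, fun r hr => not_lt.1 fun hRr => (hR r hRr.le).not_ge hr⟩
  refine ⟨fun h => ?_, fun h => csSup_le hne fun r' hr' => hW.le_iff_le.1 (hr'.trans h)⟩
  suffices s ≤ W (sSup {r | W r ≤ s}) from this.trans (W.mono h)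
  -- right continuity: `W < s` just to the right of the supremum would contradict maximality
  by_contra! hlt
  obtain ⟨r, hr, hWr⟩ := (eventually_mem_nhdsWithin.and
    ((W.right_continuous _).mono_left (nhdsWithin_mono _ Ioi_subset_Ici_self)
      (Iio_mem_nhds hlt))).exists
  exact (le_csSup hbdd (show W r ≤ s from hWr.le)).not_gt hr

section LowerAdjoint

variable {w : ℝ → ℝ} (gc : GaloisConnection w W)
include gc

theorem leftLim_le_of_gc (s : ℝ) : leftLim W (w s) ≤ s :=
  le_of_tendsto (W.mono.tendsto_leftLim (w s)) <|
    eventually_nhdsWithin_of_forall fun _ hr => (gc.lt_iff_lt.1 hr).le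

theorem measure_Ioo_le_of_gc (a b : ℝ) :
    W.measure (Ioo (w a) (w b)) ≤ ENNReal.ofReal (b - a) := by
  rw [W.measure_Ioo]
  exact ENNReal.ofReal_le_ofReal (by linarith [leftLim_le_of_gc gc b, gc.le_u_l a])

theorem map_volume_of_gc : volume.map w = W.measure := by
  refine (Measure.ext_of_Ioc _ _ fun a b _ => ?_).symm
  have hpre : w ⁻¹' Ioc a b = Ioc (W a) (W b) := by
    ext s
    simp only [mem_preimage, mem_Ioc, gc.lt_iff_lt, gc s b]
  rw [Measure.map_apply gc.monotone_l.measurable measurableSet_Ioc, hpre, Real.volume_Ioc,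
    W.measure_Ioc]

theorem apply_eq_of_gc_of_continuousAt {s : ℝ} (h : ContinuousAt W (w s)) : W (w s) = s := by
  refine le_antisymm ?_ (gc.le_u_l s)
  rw [← leftLim_eq_of_tendsto (h.tendsto.mono_left nhdsWithin_le_nhds)]
  exact leftLim_le_of_gc gc s

theorem volume_image_eq_zero_of_gc (hac : volume ≪ W.measure) {E : Set ℝ} (hE : volume E = 0) :
    volume (w '' E) = 0 := by
  obtain ⟨F, hEF, hF, hF0⟩ := exists_measurable_superset_of_null hE
  set D := {x | ¬ContinuousAt W x}
  have hD : D.Countable := W.mono.countable_not_continuousAt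
  have himage : w '' E ⊆ (W ⁻¹' F \ D) ∪ D := by
    rintro _ ⟨s, hs, rfl⟩
    by_cases hsD : w s ∈ D
    · exact Or.inr hsD
    · exact Or.inl ⟨by simpa [apply_eq_of_gc_of_continuousAt gc (not_not.1 hsD)] using hEF hs,
        hsD⟩
  have hnull : W.measure (W ⁻¹' F \ D) = 0 := by
    rw [← map_volume_of_gc gc,
      Measure.map_apply gc.monotone_l.measurable ((W.mono.measurable hF).diff hD.measurableSet)]
    refine measure_mono_null (fun s ⟨hs, hsD⟩ => ?_) hF0
    simpa [apply_eq_of_gc_of_continuousAt gc (not_not.1 hsD)] using hs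
  exact measure_mono_null himage (measure_union_null (hac hnull) (hD.measure_zero volume))

theorem continuous_of_gc (hW : StrictMono W) : Continuous w :=
  gc.monotone_l.continuous_of_surjective fun r => ⟨W r, hW.injective (gc.u_l_u_eq_u r)⟩

theorem exists_pos_sum_abs_sub_lt_of_gc (hac : volume ≪ W.measure) (a b : ℝ) {ε : ℝ}
    (hε : 0 < ε) :
    ∃ δ > 0, ∀ (n : ℕ) (α β : Fin n → ℝ),
      (∀ i, α i ∈ Icc a b ∧ β i ∈ Icc a b ∧ α i ≤ β i) →
      (Pairwise fun i j => Disjoint (Ioo (α i) (β i)) (Ioo (α j) (β j))) →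
      (∑ i, (β i - α i)) < δ → (∑ i, |w (β i) - w (α i)|) < ε := by
  have hw := gc.monotone_l
  have hνμ : volume.restrict (Icc (w a) (w b)) ≪ W.measure :=
    (Measure.absolutelyContinuous_of_le Measure.restrict_le_self).trans hac
  obtain ⟨δ', hδ', hν⟩ := hνμ.exists_pos_forall_measure_lt (ENNReal.ofReal_pos.2 hε).ne'
  obtain ⟨δ, -, hδ, hδδ'⟩ := ENNReal.lt_iff_exists_real_btwn.1 hδ'
  refine ⟨δ, ENNReal.ofReal_pos.1 hδ, fun n α β hαβ hdisj hsum => ?_⟩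
  set S := ⋃ i, Ioo (w (α i)) (w (β i))
  have hS : MeasurableSet S := MeasurableSet.iUnion fun _ => measurableSet_Ioo
  have hμS : W.measure S < δ' := calc
    W.measure S ≤ ∑ i, W.measure (Ioo (w (α i)) (w (β i))) := measure_iUnion_fintype_le _ _
    _ ≤ ∑ i, ENNReal.ofReal (β i - α i) :=
      Finset.sum_le_sum fun i _ => measure_Ioo_le_of_gc gc _ _
    _ = ENNReal.ofReal (∑ i, (β i - α i)) :=
      (ENNReal.ofReal_sum_of_nonneg fun i _ => sub_nonneg.2 (hαβ i).2.2).symm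
    _ < ENNReal.ofReal δ := (ENNReal.ofReal_lt_ofReal_iff (ENNReal.ofReal_pos.1 hδ)).2 hsum
    _ < δ' := hδδ'
  have hSsub : S ⊆ Icc (w a) (w b) := iUnion_subset fun i =>
    Ioo_subset_Icc_self.trans (Icc_subset_Icc (hw (hαβ i).1.1) (hw (hαβ i).2.1.2))
  have hvolS : volume S = ENNReal.ofReal (∑ i, |w (β i) - w (α i)|) := by
    rw [measure_iUnion (fun i j hij => hw.disjoint_Ioo_map (hdisj hij))
      fun _ => measurableSet_Ioo, tsum_fintype,
      ENNReal.ofReal_sum_of_nonneg fun i _ => abs_nonneg _]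
    refine Finset.sum_congr rfl fun i _ => ?_
    rw [Real.volume_Ioo, abs_of_nonneg (sub_nonneg.2 (hw (hαβ i).2.2))]
  have := hν S hS hμS
  rw [Measure.restrict_apply hS, inter_eq_left.2 hSsub, hvolS] at this
  exact (ENNReal.ofReal_lt_ofReal_iff hε).1 this

end LowerAdjoint

end StieltjesFunction

open StieltjesFunction

/-- for `W ∈ 𝒲`, the generalized inverse
`w(s) = sup {r : W r ≤ s}` is absolutely continuous on `[0,1]`; in particular
it is continuous, nondecreasing and has the Lusin property (it maps Lebesgue
null subsets of `[0,1]` to null sets). -/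
theorem statement_16 (W : StieltjesFunction ℝ) (hW : MemW W)
    (w : ℝ → ℝ) (hw : ∀ s, w s = sSup {r : ℝ | W r ≤ s}) :
    -- absolute continuity of `w` on `[0,1]` (ε-δ form over finite disjoint
    -- families of subintervals):
    (∀ ε > 0, ∃ δ > 0, ∀ (n : ℕ) (α β : Fin n → ℝ),
      (∀ i, α i ∈ Icc (0:ℝ) 1 ∧ β i ∈ Icc (0:ℝ) 1 ∧ α i ≤ β i) →
      (Pairwise fun i j => Disjoint (Ioo (α i) (β i)) (Ioo (α j) (β j))) →
      (∑ i, (β i - α i)) < δ →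
      (∑ i, |w (β i) - w (α i)|) < ε) ∧
    -- in particular, `w` is continuous and nondecreasing on `[0,1]`
    ContinuousOn w (Icc 0 1) ∧
    MonotoneOn w (Icc 0 1) ∧
    -- and has the Lusin property
    (∀ E ⊆ Icc (0:ℝ) 1, MeasurableSet E → volume E = 0 →
      volume (w '' E) = 0) := by
  obtain ⟨-, hW1, hac⟩ := hW
  have hWs : StrictMono W := strictMono_of_volume_absolutelyContinuous hac
  -- `W` is a lift of a degree-one circle map, hence tends to `±∞`
  let f : CircleDeg1Lift := ⟨⟨W, W.mono⟩, hW1⟩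
  have gc : GaloisConnection w W := by
    simpa only [← funext hw] using gc_sSup_setOf_le f.tendsto_atTop f.tendsto_atBot hWs
  exact ⟨fun ε hε => exists_pos_sum_abs_sub_lt_of_gc gc hac 0 1 hε,
    (continuous_of_gc gc hWs).continuousOn, gc.monotone_l.monotoneOn _,
    fun E _ _ hE => volume_image_eq_zero_of_gc gc hac hE⟩
end
end
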